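/- Let {α_j} be an interpolating sequence with δ_n arranged so that δ_n → 1 and Σ_n (1-δ_n²)^{p/2} < ∞ for some 2 ≤ p < ∞. Suppose there is a constant C such that for every N, the operator norm of G_N - I (the Gram matrix of the tail sequence {α_j}_{j≥N} minus the identity) is at most C√(1-δ_N). Then G - I is in the Schatten p-class. -/

import Mathlib

noncomputable abbrev ellTwo : Type := lp (fun _ : ℕ => ℂ) 2

/-- The `n`-th approximation number (singular value) of `T`. -/
noncomputable def approxNumber (T : ellTwo →L[ℂ] ellTwo) (n : ℕ) : ℝ :=
  sInf {c : ℝ | ∃ F : ellTwo →L[ℂ] ellTwo,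
    LinearMap.rank (F : ellTwo →ₗ[ℂ] ellTwo) ≤ (n : Cardinal) ∧ c = ‖T - F‖}

/-- `T` is in the Schatten `p`-class: compact with `p`-summable singular values. -/
def MemSchatten (p : ℝ) (T : ellTwo →L[ℂ] ellTwo) : Prop :=
  IsCompactOperator T ∧ Summable (fun n : ℕ => approxNumber T n ^ p)

/-- The Gram matrix entry `⟨g_j, g_i⟩` of the normalized Szegő kernels at `α i, α j`. -/
noncomputable def gramEntry (α : ℕ → ℂ) (i j : ℕ) : ℂ :=
  ((Real.sqrt ((1 - ‖α i‖ ^ 2) * (1 - ‖α j‖ ^ 2)) : ℝ) : ℂ) /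
    (1 - (starRingEnd ℂ) (α i) * α j)

/-!
Let `S` be the backward shift by `N` on `ℓ²` and `P = 1 - S† S` the projection onto the first
`N` coordinates; then `S (G - 1) S† = G_N - 1`. The operator `G - 1` differs from
`P (G - 1) + (1 - P) (G - 1) P`, which has rank at most `2N`, by
`(1 - P) (G - 1) (1 - P) = S† (G_N - 1) S`, of norm at most `C √(1 - d N)`. So the `2N`-th and
`(2N+1)`-st approximation numbers of `G - 1` are at most `C √(1 - d N)`, whose `p`-th power is
at most `C^p (1 - d N ^ 2)^(p/2)` because `0 ≤ d N ≤ 1`. Summability of the `p`-th powers forces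
the approximation numbers to `0`, so `G - 1` is also compact.
-/

open Filter Topology ContinuousLinearMap
open scoped InnerProductSpace

local notation "𝐞" i:max => (lp.single 2 i (1 : ℂ) : ellTwo)

theorem isCompactOperator_of_rank_lt_aleph0 {𝕜 E F : Type*} [RCLike 𝕜]
    [NormedAddCommGroup E] [NormedSpace 𝕜 E] [NormedAddCommGroup F] [NormedSpace 𝕜 F]
    {T : E →L[𝕜] F} (hT : (T : E →ₗ[𝕜] F).rank < Cardinal.aleph0) : IsCompactOperator T := by
  have : FiniteDimensional 𝕜 (LinearMap.range (T : E →ₗ[𝕜] F)) :=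
    Module.rank_lt_aleph0_iff.mp hT
  exact (isCompactOperator_of_locallyCompactSpace_dom
    (T.codRestrict _ (LinearMap.mem_range_self (T : E →ₗ[𝕜] F)))).clm_comp
    (Submodule.subtypeL _)

lemma norm_blaschke_le_one {a b : ℂ} (ha : ‖a‖ ≤ 1) (hb : ‖b‖ ≤ 1) :
    ‖(a - b) / (1 - (starRingEnd ℂ) b * a)‖ ≤ 1 := by
  have hnormSq : Complex.normSq (1 - (starRingEnd ℂ) b * a) - Complex.normSq (a - b) =
      (1 - Complex.normSq a) * (1 - Complex.normSq b) := by
    simp only [Complex.normSq_apply, Complex.sub_re, Complex.sub_im, Complex.mul_re,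
      Complex.mul_im, Complex.one_re, Complex.one_im, Complex.conj_re, Complex.conj_im]
    ring
  have hle : Complex.normSq (a - b) ≤ Complex.normSq (1 - (starRingEnd ℂ) b * a) := by
    rw [Complex.normSq_eq_norm_sq a, Complex.normSq_eq_norm_sq b] at hnormSq
    have := mul_nonneg (sub_nonneg.2 (pow_le_one₀ (norm_nonneg a) ha (n := 2)))
      (sub_nonneg.2 (pow_le_one₀ (norm_nonneg b) hb (n := 2)))
    linarith
  rw [norm_div]
  refine div_le_one_of_le₀ ?_ (norm_nonneg _)
  rw [Complex.norm_def, Complex.norm_def]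
  exact Real.sqrt_le_sqrt hle

lemma Real.tprod_mem_Icc_zero_one {ι : Type*} {f : ι → ℝ} (hf : ∀ i, f i ∈ Set.Icc 0 1) :
    ∏' i, f i ∈ Set.Icc 0 1 :=
  ⟨tprod_nonneg fun i => (hf i).1, tprod_le_of_prod_le' le_rfl fun _ =>
    Finset.prod_le_one (fun i _ => (hf i).1) fun i _ => (hf i).2⟩

lemma rpow_mul_sqrt_one_sub_le {c t p : ℝ} (hc : 0 ≤ c) (ht : t ∈ Set.Icc 0 1) (hp : 0 ≤ p) :
    (c * √(1 - t)) ^ p ≤ c ^ p * (1 - t ^ 2) ^ (p / 2) := by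
  have h1t : 0 ≤ 1 - t := by linarith [ht.2]
  rw [Real.mul_rpow hc (Real.sqrt_nonneg _), Real.sqrt_eq_rpow, ← Real.rpow_mul h1t,
    one_div_mul_eq_div]
  gcongr
  nlinarith [ht.1, ht.2]

namespace ellTwo

lemma inner_single_one_left (i : ℕ) (x : ellTwo) : ⟪𝐞 i, x⟫_ℂ = x i := by
  simp [lp.inner_single_left]

theorem clm_ext_single {A B : ellTwo →L[ℂ] ellTwo} (h : ∀ j, A (𝐞 j) = B (𝐞 j)) : A = B := by
  ext1 x
  have hasSum_apply (T : ellTwo →L[ℂ] ellTwo) : HasSum (fun j => x j • T (𝐞 j)) (T x) := by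
    simpa [← map_smul, ← lp.single_smul] using (lp.hasSum_single ENNReal.ofNat_ne_top x).mapL T
  exact (hasSum_apply A).unique (by simpa only [h] using hasSum_apply B)

theorem clm_ext_inner_single {A B : ellTwo →L[ℂ] ellTwo}
    (h : ∀ i j, ⟪𝐞 i, A (𝐞 j)⟫_ℂ = ⟪𝐞 i, B (𝐞 j)⟫_ℂ) : A = B :=
  clm_ext_single fun j => lp.ext <| funext fun i => by simpa [inner_single_one_left] using h i j

lemma sum_norm_rpow_shift_le (N : ℕ) (x : ellTwo) (s : Finset ℕ) :
    ∑ j ∈ s, ‖x (j + N)‖ ^ (2 : ENNReal).toReal ≤ ‖x‖ ^ (2 : ENNReal).toReal := by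
  simpa [Finset.sum_map] using
    lp.sum_rpow_le_norm_rpow (by norm_num) x (s.map (addRightEmbedding N))

noncomputable def shift (N : ℕ) : ellTwo →L[ℂ] ellTwo :=
  LinearMap.mkContinuous
    { toFun := fun x => ⟨fun j => x (j + N), memℓp_gen' (sum_norm_rpow_shift_le N x)⟩
      map_add' _ _ := rfl
      map_smul' _ _ := rfl }
    1 fun x => by
      rw [one_mul]
      exact lp.norm_le_of_forall_sum_le (by norm_num) (norm_nonneg x) (sum_norm_rpow_shift_le N x)

lemma shift_apply (N : ℕ) (x : ellTwo) (j : ℕ) : shift N x j = x (j + N) := rfl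

lemma norm_shift_le (N : ℕ) : ‖shift N‖ ≤ 1 :=
  LinearMap.mkContinuous_norm_le _ zero_le_one _

lemma shift_single (N j : ℕ) : shift N (𝐞 j) = if N ≤ j then 𝐞 (j - N) else 0 := by
  ext k
  split_ifs with h
  · simp only [shift_apply, lp.single_apply, Pi.single_apply]
    congr 1
    exact propext (by omega)
  · simp [shift_apply, lp.single_apply, Pi.single_apply]; omega

lemma adjoint_shift_single (N i : ℕ) : adjoint (shift N) (𝐞 i) = 𝐞 (i + N) :=
  ext_inner_right ℂ fun x => by
    rw [adjoint_inner_left, inner_single_one_left, inner_single_one_left, shift_apply]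

lemma shift_mul_adjoint_shift (N : ℕ) : shift N * adjoint (shift N) = 1 :=
  clm_ext_single fun i => by simp [adjoint_shift_single, shift_single]

lemma inner_single_shift_mul_mul_adjoint_shift (N i j : ℕ) (A : ellTwo →L[ℂ] ellTwo) :
    ⟪𝐞 i, (shift N * A * adjoint (shift N)) (𝐞 j)⟫_ℂ = ⟪𝐞 (i + N), A (𝐞 (j + N))⟫_ℂ := by
  rw [mul_apply_eq_comp, mul_apply_eq_comp, ← adjoint_inner_left, adjoint_shift_single,
    adjoint_shift_single]

noncomputable def proj (N : ℕ) : ellTwo →L[ℂ] ellTwo :=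
  ∑ k ∈ Finset.range N, (innerSL ℂ (𝐞 k)).smulRight (𝐞 k)

lemma proj_single (N j : ℕ) : proj N (𝐞 j) = if j < N then 𝐞 j else 0 := by
  simp [proj, inner_single_one_left, lp.single_apply, Pi.single_apply]

lemma rank_proj_le (N : ℕ) : (proj N : ellTwo →ₗ[ℂ] ellTwo).rank ≤ N := by
  have hrange : LinearMap.range (proj N : ellTwo →ₗ[ℂ] ellTwo) ≤
      Submodule.span ℂ (Set.range fun k : Fin N => 𝐞 k) := by
    rintro _ ⟨x, rfl⟩
    simp only [proj, ContinuousLinearMap.coe_coe, sum_apply]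
    exact Submodule.sum_mem _ fun k hk => Submodule.smul_mem _ _
      (Submodule.subset_span ⟨⟨k, Finset.mem_range.mp hk⟩, rfl⟩)
  calc _ ≤ _ := Submodule.rank_mono hrange
    _ ≤ _ := rank_span_le _
    _ ≤ _ := Cardinal.mk_range_le
    _ = N := Cardinal.mk_fin N

lemma adjoint_shift_mul_shift (N : ℕ) : adjoint (shift N) * shift N = 1 - proj N :=
  clm_ext_single fun j => by
    by_cases h : j < N
    · simp [shift_single, proj_single, h, not_le.2 h]
    · simp [shift_single, adjoint_shift_single, proj_single, h, not_lt.1 h]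

section approxNumber

variable (T : ellTwo →L[ℂ] ellTwo)

lemma bddBelow_approxNumber_set (n : ℕ) :
    BddBelow {c : ℝ | ∃ F : ellTwo →L[ℂ] ellTwo,
      (F : ellTwo →ₗ[ℂ] ellTwo).rank ≤ n ∧ c = ‖T - F‖} :=
  ⟨0, by rintro c ⟨F, -, rfl⟩; exact norm_nonneg _⟩

lemma approxNumber_nonneg (n : ℕ) : 0 ≤ approxNumber T n :=
  Real.sInf_nonneg (by rintro c ⟨F, -, rfl⟩; exact norm_nonneg _)

lemma approxNumber_le_norm_sub {n : ℕ} {F : ellTwo →L[ℂ] ellTwo}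
    (hF : (F : ellTwo →ₗ[ℂ] ellTwo).rank ≤ n) : approxNumber T n ≤ ‖T - F‖ :=
  csInf_le (bddBelow_approxNumber_set T n) ⟨F, hF, rfl⟩

lemma exists_norm_sub_lt_approxNumber_add (n : ℕ) {ε : ℝ} (hε : 0 < ε) :
    ∃ F : ellTwo →L[ℂ] ellTwo, (F : ellTwo →ₗ[ℂ] ellTwo).rank ≤ n ∧
      ‖T - F‖ < approxNumber T n + ε := by
  obtain ⟨_, ⟨F, hF, rfl⟩, hlt⟩ := exists_lt_of_csInf_lt (by exact ⟨_, 0, by simp, rfl⟩)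
    (lt_add_of_pos_right (approxNumber T n) hε)
  exact ⟨F, hF, hlt⟩

lemma approxNumber_antitone : Antitone (approxNumber T) := fun m n hmn =>
  csInf_le_csInf (bddBelow_approxNumber_set T n) ⟨_, 0, by simp, rfl⟩
    fun _ ⟨F, hF, hc⟩ => ⟨F, hF.trans (by exact_mod_cast hmn), hc⟩

theorem isCompactOperator_of_tendsto_approxNumber
    (h : Tendsto (approxNumber T) atTop (𝓝 0)) : IsCompactOperator T := by
  choose F hF_rank hF_norm using fun n : ℕ =>
    exists_norm_sub_lt_approxNumber_add T n (Nat.one_div_pos_of_nat (n := n))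
  have hF : Tendsto F atTop (𝓝 T) := by
    rw [tendsto_iff_norm_sub_tendsto_zero]
    refine squeeze_zero (fun _ => norm_nonneg _) (fun n => (norm_sub_rev _ _).trans_le
      (hF_norm n).le) ?_
    simpa using h.add tendsto_one_div_add_atTop_nhds_zero_nat
  exact isCompactOperator_of_tendsto hF (Eventually.of_forall fun n =>
    isCompactOperator_of_rank_lt_aleph0 ((hF_rank n).trans_lt Cardinal.natCast_lt_aleph0))

theorem memSchatten_of_summable {p : ℝ} (hp : 0 < p)
    (h : Summable fun n => approxNumber T n ^ p) : MemSchatten p T := by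
  refine ⟨isCompactOperator_of_tendsto_approxNumber T ?_, h⟩
  have hroot : Tendsto (fun n => (approxNumber T n ^ p) ^ p⁻¹) atTop (𝓝 0) := by
    simpa [Function.comp_def, Real.zero_rpow (inv_ne_zero hp.ne')] using
      ((Real.continuousAt_rpow_const 0 p⁻¹ (Or.inr (inv_pos.2 hp).le)).tendsto).comp
        h.tendsto_atTop_zero
  simpa [Real.rpow_rpow_inv (approxNumber_nonneg T _) hp.ne'] using hroot

theorem approxNumber_two_mul_le (N : ℕ) :
    approxNumber T (2 * N) ≤ ‖shift N * T * adjoint (shift N)‖ := by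
  set P := proj N
  set S := shift N
  have hrank : ((P * T + (1 - P) * T * P : ellTwo →L[ℂ] ellTwo) : ellTwo →ₗ[ℂ] ellTwo).rank ≤
      (2 * N : ℕ) :=
    calc _ ≤ ((P * T : ellTwo →L[ℂ] ellTwo) : ellTwo →ₗ[ℂ] ellTwo).rank +
          (((1 - P) * T * P : ellTwo →L[ℂ] ellTwo) : ellTwo →ₗ[ℂ] ellTwo).rank :=
          LinearMap.rank_add_le _ _
      _ ≤ N + N := add_le_add ((LinearMap.rank_comp_le_left _ _).trans (rank_proj_le N))
          ((LinearMap.rank_comp_le_right _ _).trans (rank_proj_le N))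
      _ = (2 * N : ℕ) := by push_cast; ring
  have hresidual : T - (P * T + (1 - P) * T * P) = adjoint S * (S * T * adjoint S) * S := by
    calc _ = (1 - P) * T * (1 - P) := by noncomm_ring
      _ = _ := by rw [← adjoint_shift_mul_shift]; noncomm_ring
  calc approxNumber T (2 * N) ≤ ‖adjoint S * (S * T * adjoint S) * S‖ :=
        hresidual ▸ approxNumber_le_norm_sub T hrank
    _ ≤ ‖adjoint S‖ * ‖S * T * adjoint S‖ * ‖S‖ := norm_mul₃_le
    _ ≤ 1 * ‖S * T * adjoint S‖ * 1 := by
        gcongr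
        · exact (LinearIsometryEquiv.norm_map _ _).trans_le (norm_shift_le N)
        · exact norm_shift_le N
    _ = _ := by ring

theorem summable_approxNumber_rpow_of_le {p : ℝ} (hp : 0 ≤ p) {u : ℕ → ℝ}
    (hu : Summable fun N => u N ^ p) (h : ∀ N, approxNumber T (2 * N) ≤ u N) :
    Summable fun n => approxNumber T n ^ p := by
  have hbound {n : ℕ} (N : ℕ) (hn : 2 * N ≤ n) : approxNumber T n ^ p ≤ u N ^ p :=
    Real.rpow_le_rpow (approxNumber_nonneg T n)
      ((approxNumber_antitone T hn).trans (h N)) hp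
  have hnonneg (n : ℕ) : 0 ≤ approxNumber T n ^ p := Real.rpow_nonneg (approxNumber_nonneg T n) p
  exact Summable.even_add_odd
    (hu.of_nonneg_of_le (fun _ => hnonneg _) fun N => hbound N le_rfl)
    (hu.of_nonneg_of_le (fun _ => hnonneg _) fun N => hbound N (Nat.le_succ _))

end approxNumber

end ellTwo

open ellTwo in
theorem gram_sub_id_schatten_of_summable_general (α : ℕ → ℂ)
    (hα : ∀ j, ‖α j‖ < 1)
    (d : ℕ → ℝ)
    (hd : ∀ n, d n = ∏' i : ℕ, if i = n then 1 else
      ‖(α i - α n) / (1 - (starRingEnd ℂ) (α n) * α i)‖)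
    (p : ℝ) (hp2 : 2 ≤ p)
    (hsum : Summable (fun n : ℕ => (1 - d n ^ 2) ^ (p / 2)))
    (G : ellTwo →L[ℂ] ellTwo)
    (hG : ∀ i j : ℕ, (inner ℂ (lp.single 2 i (1:ℂ)) (G (lp.single 2 j (1:ℂ))) : ℂ) =
      gramEntry α i j)
    (GN : ℕ → (ellTwo →L[ℂ] ellTwo))
    (hGN : ∀ N i j : ℕ,
      (inner ℂ (lp.single 2 i (1:ℂ)) (GN N (lp.single 2 j (1:ℂ))) : ℂ) =
        gramEntry α (i + N) (j + N))
    (C : ℝ)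
    (hbound : ∀ N : ℕ, ‖GN N - 1‖ ≤ C * Real.sqrt (1 - d N)) :
    MemSchatten p (G - 1) := by
  have hd_mem (n : ℕ) : d n ∈ Set.Icc 0 1 := hd n ▸ Real.tprod_mem_Icc_zero_one fun i => by
    split_ifs
    · simp
    · exact ⟨norm_nonneg _, norm_blaschke_le_one (hα i).le (hα n).le⟩
  have htail (N : ℕ) : shift N * (G - 1) * adjoint (shift N) = GN N - 1 := by
    have hG_tail : shift N * G * adjoint (shift N) = GN N := clm_ext_inner_single fun i j => by
      rw [inner_single_shift_mul_mul_adjoint_shift, hG, hGN]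
    rw [mul_sub, sub_mul, mul_one, shift_mul_adjoint_shift, hG_tail]
  refine memSchatten_of_summable _ (by linarith) <|
    summable_approxNumber_rpow_of_le _ (by linarith) (u := fun N => |C| * √(1 - d N)) ?_ fun N => ?_
  · exact (hsum.mul_left (|C| ^ p)).of_nonneg_of_le (fun N => by positivity)
      fun N => rpow_mul_sqrt_one_sub_le (abs_nonneg C) (hd_mem N) (by linarith)
  · calc approxNumber (G - 1) (2 * N) ≤ ‖GN N - 1‖ := htail N ▸ approxNumber_two_mul_le _ N
      _ ≤ C * √(1 - d N) := hbound N
      _ ≤ |C| * √(1 - d N) := by gcongr; exact le_abs_self C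

theorem gram_sub_id_schatten_of_summable (α : ℕ → ℂ)
    (hα : ∀ j, ‖α j‖ < 1)
    (d : ℕ → ℝ)
    (hd : ∀ n, d n = ∏' i : ℕ, if i = n then 1 else
      ‖(α i - α n) / (1 - (starRingEnd ℂ) (α n) * α i)‖)
    (δ : ℝ) (hδ : 0 < δ) (hsep : ∀ n, δ ≤ d n)
    (htends : Filter.Tendsto d Filter.atTop (nhds 1))
    (p : ℝ) (hp2 : 2 ≤ p)
    (hsum : Summable (fun n : ℕ => (1 - d n ^ 2) ^ (p / 2)))
    (G : ellTwo →L[ℂ] ellTwo)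
    (hG : ∀ i j : ℕ, (inner ℂ (lp.single 2 i (1:ℂ)) (G (lp.single 2 j (1:ℂ))) : ℂ) =
      gramEntry α i j)
    (GN : ℕ → (ellTwo →L[ℂ] ellTwo))
    (hGN : ∀ N i j : ℕ,
      (inner ℂ (lp.single 2 i (1:ℂ)) (GN N (lp.single 2 j (1:ℂ))) : ℂ) =
        gramEntry α (i + N) (j + N))
    (C : ℝ)
    (hbound : ∀ N : ℕ, ‖GN N - 1‖ ≤ C * Real.sqrt (1 - d N)) :
    MemSchatten p (G - 1) :=
  gram_sub_id_schatten_of_summable_general α hα d hd p hp2 hsum G hG GN hGN C hbound
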